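/- Any extremal polynomial T for the weighted residual problem has at least n+1 extreme points: if K ⊂ ℂ is compact, ρ : K → [0,∞) upper semicontinuous and positive at ≥ n+1 points, z₀ ∈ ℂ̄ \ K, and T ∈ 𝒫_{n,z₀} attains ‖T‖_ρ = t_n(ρ, z₀), then the set {z ∈ K : ρ(z)|T(z)| = t_n(ρ, z₀)} contains at least n+1 distinct points. -/

import Mathlib

/-!
If the extreme set `E = {z ∈ K | ρ(z)|T(z)| = t}` of an extremal polynomial `T` had at most `n`
points (and `t > 0`, which the `n + 1` points where `ρ > 0` force), Lagrange interpolation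
gives `q` with `q = T` on `E` such that every `T - c q` is still admissible: `q(z₀) = 0` for finite
`z₀`, `deg q < n` for `z₀ = ∞`. Near `E` the polynomial `T - q` is small, so on the compact set
where `ρ|T - q| ≥ t/2`, the function `ρ|T|` stays below some `s < t`; elsewhere
`T - εq = (1 - ε)T + ε(T - q)` is a convex combination. Either way `‖T - εq‖_ρ < t` for small
`ε > 0`, contradicting minimality.
-/

open MeasureTheory

/-- The weighted sup-norm `‖P‖_ρ = sup_{z ∈ K} ρ(z) |P(z)|` of a polynomial on `K`. -/
noncomputable def wsup (K : Set ℂ) (ρ : ℂ → ℝ) (P : Polynomial ℂ) : ℝ :=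
  sSup ((fun z => ρ z * ‖P.eval z‖) '' K)

/-- The admissible class `𝒫_{n,z₀}`: polynomials of degree `≤ n` normalized at `z₀` when
`z₀ = some w` is a finite point, and monic polynomials of degree `n` when `z₀ = none` (i.e.
`z₀ = ∞`). -/
def AdmissiblePoly (n : ℕ) (z₀ : Option ℂ) (P : Polynomial ℂ) : Prop :=
  match z₀ with
  | some w => P.natDegree ≤ n ∧ P.eval w = 1
  | none => P.Monic ∧ P.natDegree = n

/-- The weighted Chebyshev/residual extremal value `t_n(ρ, z₀)`. -/
noncomputable def tExtremal (K : Set ℂ) (ρ : ℂ → ℝ) (n : ℕ) (z₀ : Option ℂ) : ℝ :=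
  sInf {t : ℝ | ∃ P : Polynomial ℂ, AdmissiblePoly n z₀ P ∧ t = wsup K ρ P}

open Filter Topology Polynomial

section Semicontinuity

variable {α : Type*} [TopologicalSpace α] {s : Set α}

theorem UpperSemicontinuousOn.mul_of_nonneg {f g : α → ℝ} (hf : UpperSemicontinuousOn f s)
    (hg : UpperSemicontinuousOn g s) (hf0 : ∀ x ∈ s, 0 ≤ f x) (hg0 : ∀ x ∈ s, 0 ≤ g x) :
    UpperSemicontinuousOn (fun x => f x * g x) s := by
  intro x hx y hy
  have hprod : Tendsto (fun δ : ℝ => (f x + δ) * (g x + δ)) (𝓝[>] 0) (𝓝 (f x * g x)) := by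
    have h := ((tendsto_const_nhds (x := f x)).add tendsto_id).mul
      ((tendsto_const_nhds (x := g x)).add (tendsto_id (x := 𝓝 (0 : ℝ))))
    simpa using h.mono_left nhdsWithin_le_nhds
  obtain ⟨δ, hδy, hδ⟩ := ((hprod.eventually (gt_mem_nhds hy)).and self_mem_nhdsWithin).exists
  filter_upwards [hf x hx _ (lt_add_of_pos_right _ hδ), hg x hx _ (lt_add_of_pos_right _ hδ),
    self_mem_nhdsWithin] with z hfz hgz hz
  calc f z * g z ≤ (f x + δ) * (g x + δ) :=
        mul_le_mul hfz.le hgz.le (hg0 z hz) (by linarith [hf0 x hx])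
    _ < y := hδy

theorem IsCompact.exists_lt_forall_le_of_upperSemicontinuousOn {f : α → ℝ} {t : ℝ}
    (hs : IsCompact s) (hf : UpperSemicontinuousOn f s) (hlt : ∀ x ∈ s, f x < t) :
    ∃ r < t, ∀ x ∈ s, f x ≤ r := by
  rcases s.eq_empty_or_nonempty with rfl | hne
  · exact ⟨t - 1, by linarith, by simp⟩
  · obtain ⟨x, hx, hmax⟩ := hf.exists_isMaxOn hne hs
    exact ⟨f x, hlt x hx, fun y hy => hmax hy⟩

end Semicontinuity

theorem norm_sub_smul_le_convex {E : Type*} [SeminormedAddCommGroup E] [NormedSpace ℝ E]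
    (a b : E) {ε : ℝ} (hε0 : 0 ≤ ε) (hε1 : ε ≤ 1) :
    ‖a - ε • b‖ ≤ (1 - ε) * ‖a‖ + ε * ‖a - b‖ := by
  have hsplit : a - ε • b = (1 - ε) • a + ε • (a - b) := by
    rw [smul_sub, sub_smul, one_smul]; abel
  rw [hsplit]
  refine (norm_add_le _ _).trans_eq ?_
  rw [norm_smul, norm_smul, Real.norm_of_nonneg (by linarith), Real.norm_of_nonneg hε0]

theorem norm_sub_smul_le_add {E : Type*} [SeminormedAddCommGroup E] [NormedSpace ℝ E]
    (a b : E) {ε : ℝ} (hε0 : 0 ≤ ε) : ‖a - ε • b‖ ≤ ‖a‖ + ε * ‖b‖ := by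
  refine (norm_sub_le _ _).trans_eq ?_
  rw [norm_smul, Real.norm_of_nonneg hε0]

theorem exists_forall_weighted_norm_sub_smul_le {X E : Type*} [TopologicalSpace X]
    [SeminormedAddCommGroup E] [NormedSpace ℝ E] {K : Set X} {ρ : X → ℝ} {f g : X → E} {t : ℝ}
    (hK : IsCompact K) (hρ : UpperSemicontinuousOn ρ K) (hρ0 : ∀ z ∈ K, 0 ≤ ρ z)
    (hf : Continuous f) (hg : Continuous g) (ht : 0 < t) (hft : ∀ z ∈ K, ρ z * ‖f z‖ ≤ t)
    (hfg : ∀ z ∈ K, ρ z * ‖f z‖ = t → g z = f z) :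
    ∃ ε > (0 : ℝ), ∃ r < t, ∀ z ∈ K, ρ z * ‖f z - ε • g z‖ ≤ r := by
  have husc : ∀ u : X → E, Continuous u → UpperSemicontinuousOn (fun z => ρ z * ‖u z‖) K :=
    fun u hu => hρ.mul_of_nonneg hu.norm.continuousOn.upperSemicontinuousOn hρ0
      fun _ _ => norm_nonneg _
  set B := K ∩ (fun z => ρ z * ‖f z - g z‖) ⁻¹' Set.Ici (t / 2)
  have hB : IsCompact B := (husc _ (hf.sub hg)).isCompact_inter_preimage_Ici hK _
  -- `B` avoids the extreme set, where `f - g` vanishes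
  obtain ⟨s, hst, hs⟩ : ∃ s < t, ∀ z ∈ B, ρ z * ‖f z‖ ≤ s := by
    refine hB.exists_lt_forall_le_of_upperSemicontinuousOn ((husc f hf).mono
      Set.inter_subset_left) fun z ⟨hzK, hzB⟩ => (hft z hzK).lt_of_ne fun heq => ?_
    have : t / 2 ≤ ρ z * ‖f z - g z‖ := hzB
    simp only [hfg z hzK heq, sub_self, norm_zero, mul_zero] at this
    linarith
  obtain ⟨M, hM⟩ := (husc g hg).bddAbove_of_isCompact hK
  have hsmall : ∀ᶠ ε in 𝓝 (0 : ℝ), ε < 1 ∧ s + ε * M < t := by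
    refine (eventually_lt_nhds one_pos).and ?_
    exact (continuous_const.add (continuous_id.mul continuous_const)).tendsto' 0 s
      (by simp) |>.eventually (gt_mem_nhds hst)
  obtain ⟨ε, ⟨hε1, hεM⟩, hε0 : 0 < ε⟩ := ((hsmall.filter_mono nhdsWithin_le_nhds).and
    (self_mem_nhdsWithin (s := Set.Ioi (0 : ℝ)))).exists
  refine ⟨ε, hε0, max (s + ε * M) (t - ε * (t / 2)), max_lt hεM (by nlinarith), fun z hz => ?_⟩
  have hρz := hρ0 z hz
  by_cases hzB : z ∈ B
  · calc ρ z * ‖f z - ε • g z‖ ≤ ρ z * ‖f z‖ + ε * (ρ z * ‖g z‖) := by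
          nlinarith [norm_sub_smul_le_add (f z) (g z) hε0.le]
      _ ≤ s + ε * M := add_le_add (hs z hzB) (by gcongr; exact hM ⟨z, hz, rfl⟩)
      _ ≤ _ := le_max_left _ _
  · have hfgz : ρ z * ‖f z - g z‖ < t / 2 := not_le.mp fun h => hzB ⟨hz, h⟩
    calc ρ z * ‖f z - ε • g z‖ ≤ (1 - ε) * (ρ z * ‖f z‖) + ε * (ρ z * ‖f z - g z‖) := by
          nlinarith [norm_sub_smul_le_convex (f z) (g z) hε0.le hε1.le]
      _ ≤ (1 - ε) * t + ε * (t / 2) :=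
          add_le_add (mul_le_mul_of_nonneg_left (hft z hz) (by linarith))
            (mul_le_mul_of_nonneg_left hfgz.le hε0.le)
      _ = t - ε * (t / 2) := by ring
      _ ≤ _ := le_max_right _ _

theorem Set.exists_finset_coe_eq_card_lt_of_not_exists {α : Type*} {s : Set α} {m : ℕ}
    (h : ¬∃ S : Finset α, S.card = m ∧ ↑S ⊆ s) : ∃ F : Finset α, ↑F = s ∧ F.card < m := by
  have hfin : s.Finite := Set.not_infinite.mp fun hinf =>
    h (let ⟨S, hS, hcard⟩ := hinf.exists_subset_card_eq m; ⟨S, hcard, hS⟩)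
  refine ⟨hfin.toFinset, hfin.coe_toFinset, not_le.mp fun hle => h ?_⟩
  obtain ⟨S, hS, hcard⟩ := Finset.exists_subset_card_eq hle
  exact ⟨S, hcard, fun z hz => hfin.mem_toFinset.mp (hS hz)⟩

theorem Polynomial.exists_degree_lt_card_eval_eq {F : Type*} [Field F] [DecidableEq F]
    (s : Finset F) (r : F → F) : ∃ q : F[X], q.degree < s.card ∧ ∀ z ∈ s, q.eval z = r z :=
  ⟨Lagrange.interpolate s id r, Lagrange.degree_interpolate_lt r (Set.injOn_id _),
    fun _ hz => Lagrange.eval_interpolate_at_node r (Set.injOn_id _) hz⟩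

section Admissible

variable {n : ℕ} {z₀ : Option ℂ} {P : ℂ[X]}

theorem AdmissiblePoly.natDegree_le (hP : AdmissiblePoly n z₀ P) : P.natDegree ≤ n := by
  cases z₀ with
  | some w => exact hP.1
  | none => exact hP.2.le

theorem AdmissiblePoly.ne_zero (hP : AdmissiblePoly n z₀ P) : P ≠ 0 := by
  cases z₀ with
  | some w => rintro rfl; simpa using hP.2
  | none => exact hP.1.ne_zero

theorem AdmissiblePoly.exists_eval_eq_forall_sub_smul (hP : AdmissiblePoly n z₀ P)
    (F : Finset ℂ) (hF : F.card ≤ n) (hz₀F : ∀ w, z₀ = some w → w ∉ F) :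
    ∃ q : ℂ[X], (∀ z ∈ F, q.eval z = P.eval z) ∧ ∀ c : ℂ, AdmissiblePoly n z₀ (P - c • q) := by
  classical
  cases z₀ with
  | some w =>
    have hwF := hz₀F w rfl
    obtain ⟨q, hqdeg, hq⟩ := exists_degree_lt_card_eval_eq (insert w F)
      (fun z => if z = w then 0 else P.eval z)
    have hqn : q.natDegree ≤ n := by
      have hlt : q.degree < ↑(n + 1) := hqdeg.trans_le <| by
        rw [Finset.card_insert_of_notMem hwF]
        exact_mod_cast Nat.succ_le_succ hF
      rw [natDegree_le_iff_degree_le, ← Order.lt_succ_iff]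
      exact_mod_cast hlt
    refine ⟨q, fun z hz => ?_, fun c => ⟨?_, ?_⟩⟩
    · rw [hq z (Finset.mem_insert_of_mem hz), if_neg (ne_of_mem_of_not_mem hz hwF)]
    · exact (natDegree_sub_le _ _).trans (max_le hP.1 ((natDegree_smul_le _ _).trans hqn))
    · simp [hq w (Finset.mem_insert_self w F), hP.2]
  | none =>
    obtain ⟨q, hqdeg, hq⟩ := exists_degree_lt_card_eval_eq F P.eval
    have hlt : ∀ c : ℂ, (c • q).degree < P.degree := fun c => by
      rw [degree_eq_natDegree hP.1.ne_zero, hP.2]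
      exact (degree_smul_le c q).trans_lt (hqdeg.trans_le (by exact_mod_cast hF))
    refine ⟨q, hq, fun c => ⟨hP.1.sub_of_left (hlt c), ?_⟩⟩
    rw [natDegree_eq_of_degree_eq (degree_sub_eq_left_of_degree_lt (hlt c)), hP.2]

end Admissible

section WeightedSup

variable {K : Set ℂ} {ρ : ℂ → ℝ} {n : ℕ} {z₀ : Option ℂ} {P : ℂ[X]}

theorem le_wsup (hK : IsCompact K) (hρ : UpperSemicontinuousOn ρ K) (hρ0 : ∀ z ∈ K, 0 ≤ ρ z)
    {z : ℂ} (hz : z ∈ K) : ρ z * ‖P.eval z‖ ≤ wsup K ρ P :=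
  le_csSup ((hρ.mul_of_nonneg P.continuous.norm.continuousOn.upperSemicontinuousOn hρ0
    fun _ _ => norm_nonneg _).bddAbove_of_isCompact hK) ⟨z, hz, rfl⟩

theorem wsup_le (hK : K.Nonempty) {r : ℝ} (h : ∀ z ∈ K, ρ z * ‖P.eval z‖ ≤ r) :
    wsup K ρ P ≤ r :=
  csSup_le (hK.image _) (by rintro _ ⟨z, hz, rfl⟩; exact h z hz)

theorem wsup_pos (hK : IsCompact K) (hρ : UpperSemicontinuousOn ρ K) (hρ0 : ∀ z ∈ K, 0 ≤ ρ z)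
    {S : Finset ℂ} (hS : P.natDegree < S.card) (hSK : ↑S ⊆ K) (hSρ : ∀ z ∈ S, 0 < ρ z)
    (hP : P ≠ 0) : 0 < wsup K ρ P := by
  obtain ⟨z, hzS, hz⟩ : ∃ z ∈ S, P.eval z ≠ 0 := by
    by_contra! h
    exact hP (eq_zero_of_natDegree_lt_card_of_eval_eq_zero' P S h hS)
  exact (mul_pos (hSρ z hzS) (norm_pos_iff.mpr hz)).trans_le (le_wsup hK hρ hρ0 (hSK hzS))

theorem tExtremal_le_wsup (hρ0 : ∀ z ∈ K, 0 ≤ ρ z)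
    (hP : AdmissiblePoly n z₀ P) : tExtremal K ρ n z₀ ≤ wsup K ρ P := by
  refine csInf_le ⟨0, ?_⟩ ⟨P, hP, rfl⟩
  rintro _ ⟨Q, -, rfl⟩
  exact Real.sSup_nonneg (by rintro _ ⟨z, hz, rfl⟩; exact mul_nonneg (hρ0 z hz) (norm_nonneg _))

end WeightedSup

/-- Any extremal polynomial for the weighted residual/Chebyshev problem has at least `n+1`
extreme points: if `T ∈ 𝒫_{n,z₀}` attains `‖T‖_ρ = t_n(ρ, z₀)`, then the set
`{z ∈ K : ρ(z)|T(z)| = t_n(ρ, z₀)}` contains at least `n+1` distinct points. -/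
theorem extremal_poly_extreme_points
    (K : Set ℂ) (hK : IsCompact K)
    (ρ : ℂ → ℝ) (hρusc : UpperSemicontinuousOn ρ K) (hρ0 : ∀ z ∈ K, 0 ≤ ρ z)
    (n : ℕ)
    (hpos : ∃ S : Finset ℂ, n + 1 ≤ S.card ∧ ↑S ⊆ K ∧ ∀ z ∈ S, 0 < ρ z)
    (z₀ : Option ℂ) (hz₀ : ∀ w, z₀ = some w → w ∉ K)
    (T : Polynomial ℂ) (hTadm : AdmissiblePoly n z₀ T)
    (hTmin : wsup K ρ T = tExtremal K ρ n z₀) :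
    ∃ S : Finset ℂ, S.card = n + 1 ∧
      ↑S ⊆ {z ∈ K | ρ z * ‖T.eval z‖ = tExtremal K ρ n z₀} := by
  obtain ⟨S₀, hS₀card, hS₀K, hS₀ρ⟩ := hpos
  have ht : 0 < wsup K ρ T := wsup_pos hK hρusc hρ0 (hTadm.natDegree_le.trans_lt hS₀card)
    hS₀K hS₀ρ hTadm.ne_zero
  rw [← hTmin]
  by_contra hfew
  obtain ⟨F, hF, hFcard⟩ := Set.exists_finset_coe_eq_card_lt_of_not_exists hfew
  obtain ⟨q, hqT, hadm⟩ := hTadm.exists_eval_eq_forall_sub_smul F (Nat.lt_succ_iff.mp hFcard)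
    fun w hw hwF => hz₀ w hw (hF.subset hwF).1
  obtain ⟨ε, -, r, hrt, hr⟩ := exists_forall_weighted_norm_sub_smul_le hK hρusc hρ0
    T.continuous q.continuous ht (fun z hz => le_wsup hK hρusc hρ0 hz)
    fun z hz heq => hqT z (hF.symm.subset ⟨hz, heq⟩)
  have hKne : K.Nonempty :=
    (Finset.card_pos.mp (Nat.succ_pos n |>.trans_le hS₀card)).to_set.mono hS₀K
  have hbetter : wsup K ρ (T - (ε : ℂ) • q) ≤ r :=
    wsup_le hKne fun z hz => by simpa [Complex.coe_smul] using hr z hz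
  linarith [tExtremal_le_wsup hρ0 (hadm ε)]
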